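/- arXiv:1910.12701 — 4 statements merged into one kernel-verified Lean document; each statement's English description precedes it below -/
import Mathlib

section
/- Let α > 0, m ≥ 2 a fixed integer, and assume E[|x_{11}|^{τ₁} log^{τ₂}(1+|x_{11}|)] < ∞ with τ₁ = 4mα + 2 and τ₂ = 2mα + 3/2, and p = p_n → ∞ with p = O(n^α). Fix z ∈ ℝ and let ν_p = [log p - (1/(2m))(log log p + 2 log(m! √(mπ)) - z)]^{1/2}, c_n = √(2m/log n) · ν_p, and ξ₁ = x_{11} x_{12} ⋯ x_{1m}. Then n^{1+(c_n²/2)} √(log n) · P(|ξ₁| > √(n/log n)) → 0 as n → ∞. -/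
/-!
Markov's inequality for the moment of order `s = 4mα + 2`, which is finite for `ξ₁` because the
factors are independent and each has a finite `s`-th moment, gives
`P(|ξ₁| > √(n / log n)) ≤ E|ξ₁|^s · (log n / n)^(2mα + 1)`.
On the other side `n^(1 + cₙ²/2) = n · exp (m νₚ²)` and eventually `νₚ² ≤ log p`, so the prefactor
is at most `n · p^m · √(log n) = O(n^(1 + mα) √(log n))`. The product is therefore
`O((log n)^(2mα + 3/2) / n^(mα))`, which tends to `0`.
-/

open MeasureTheory ProbabilityTheory Filter Real

lemma rpow_le_one_add_log_two_rpow_mul {y a b : ℝ} (hy : 0 ≤ y) (ha : 0 ≤ a) (hb : 0 ≤ b) :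
    y ^ a ≤ 1 + log 2 ^ (-b) * (y ^ a * log (1 + y) ^ b) := by
  have hlog2 : 0 < log 2 := log_pos one_lt_two
  rcases le_or_gt y 1 with hy1 | hy1
  · have : 0 ≤ log (1 + y) := log_nonneg (by linarith)
    have : 0 ≤ log 2 ^ (-b) * (y ^ a * log (1 + y) ^ b) := by positivity
    linarith [rpow_le_one hy hy1 ha]
  · have hlog : log 2 ^ b ≤ log (1 + y) ^ b :=
      rpow_le_rpow hlog2.le (log_le_log two_pos (by linarith)) hb
    have : y ^ a ≤ y ^ a * log (1 + y) ^ b / log 2 ^ b :=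
      (le_div_iff₀ (rpow_pos_of_pos hlog2 b)).2 (by gcongr)
    rw [rpow_neg hlog2.le, inv_mul_eq_div]
    linarith

section Moments

variable {Ω ι : Type*} {mΩ : MeasurableSpace Ω} {μ : Measure Ω}

lemma integrable_abs_rpow_of_integrable_abs_rpow_mul_log_rpow [IsFiniteMeasure μ] {f : Ω → ℝ}
    (hf : AEStronglyMeasurable f μ) {a b : ℝ} (ha : 0 ≤ a) (hb : 0 ≤ b)
    (h : Integrable (fun ω => |f ω| ^ a * log (1 + |f ω|) ^ b) μ) :
    Integrable (fun ω => |f ω| ^ a) μ := by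
  refine ((integrable_const 1).add (h.const_mul (log 2 ^ (-b)))).mono'
    (((continuous_rpow_const ha).comp continuous_abs).comp_aestronglyMeasurable hf)
    (ae_of_all _ fun ω => ?_)
  rw [norm_of_nonneg (by positivity)]
  exact rpow_le_one_add_log_two_rpow_mul (abs_nonneg _) ha hb

lemma iIndepFun.integrable_finsetProd {X : ι → Ω → ℝ} (hX : iIndepFun X μ)
    (hmeas : ∀ i, Measurable (X i)) (hint : ∀ i, Integrable (X i) μ) (s : Finset ι) :
    Integrable (fun ω => ∏ i ∈ s, X i ω) μ := by
  classical
  have := hX.isProbabilityMeasure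
  induction s using Finset.cons_induction with
  | empty => simp
  | cons j s hj ih =>
    have hprod := (hX.indepFun_finsetProd_of_notMem hmeas hj).integrable_mul
      (Finset.prod_fn s X ▸ ih) (hint j)
    refine hprod.congr (ae_of_all _ fun ω => ?_)
    simp [Finset.prod_apply, Finset.prod_insert hj, mul_comm]

lemma iIndepFun.integrable_abs_finsetProd_rpow {X : ι → Ω → ℝ} (hX : iIndepFun X μ)
    (hmeas : ∀ i, Measurable (X i)) {r : ℝ} (hint : ∀ i, Integrable (fun ω => |X i ω| ^ r) μ)
    (s : Finset ι) : Integrable (fun ω => |∏ i ∈ s, X i ω| ^ r) μ := by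
  simp_rw [Finset.abs_prod, ← finsetProd_rpow _ _ (fun i _ => abs_nonneg _)]
  exact iIndepFun.integrable_finsetProd (hX.comp _ fun _ => measurable_abs.pow_const r)
    (fun i => (hmeas i).abs.pow_const r) hint s

lemma measureReal_lt_abs_le_integral_rpow_div [IsFiniteMeasure μ] {Y : Ω → ℝ} {s : ℝ}
    (hs : 0 ≤ s) (hY : Integrable (fun ω => |Y ω| ^ s) μ) {T : ℝ} (hT : 0 < T) :
    μ.real {ω | T < |Y ω|} ≤ (∫ ω, |Y ω| ^ s ∂μ) / T ^ s := by
  have hsub : {ω | T < |Y ω|} ⊆ {ω | T ^ s ≤ |Y ω| ^ s} := fun ω hω =>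
    rpow_le_rpow hT.le hω.le hs
  rw [le_div_iff₀ (rpow_pos_of_pos hT s), mul_comm]
  calc T ^ s * μ.real {ω | T < |Y ω|} ≤ T ^ s * μ.real {ω | T ^ s ≤ |Y ω| ^ s} := by
        gcongr
        exact measure_ne_top μ _
    _ ≤ _ := mul_meas_ge_le_integral_of_nonneg (ae_of_all _ fun _ => by positivity) hY _

lemma measureReal_sqrt_lt_abs_le_integral_rpow_div [IsFiniteMeasure μ] {Y : Ω → ℝ} {r : ℝ}
    (hr : 0 ≤ r) (hY : Integrable (fun ω => |Y ω| ^ (2 * r)) μ) {t : ℝ} (ht : 0 < t) :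
    μ.real {ω | √t < |Y ω|} ≤ (∫ ω, |Y ω| ^ (2 * r) ∂μ) / t ^ r := by
  have hpow : √t ^ (2 * r) = t ^ r := by
    rw [sqrt_eq_rpow, ← rpow_mul ht.le]
    ring_nf
  simpa only [hpow] using measureReal_lt_abs_le_integral_rpow_div (by positivity) hY (sqrt_pos.2 ht)

end Moments

lemma rpow_one_add_sq_div_two_eq {N : ℝ} (hN : 1 < N) {m : ℝ} (hm : 0 ≤ m) (v : ℝ) :
    N ^ (1 + (√(2 * m / log N) * v) ^ 2 / 2) = N * exp (m * v ^ 2) := by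
  have hL : 0 < log N := log_pos hN
  rw [mul_pow, sq_sqrt (by positivity), rpow_def_of_pos (by linarith), mul_add, mul_one,
    exp_add, exp_log (by linarith)]
  congr 2
  field_simp

lemma tendsto_rpow_mul_sqrt_log_div_rpow_div_log {a : ℝ} (ha : 0 < a) :
    Tendsto (fun x : ℝ => x ^ (1 + a) * √(log x) / (x / log x) ^ (2 * a + 1))
      atTop (nhds 0) := by
  refine (isLittleO_log_rpow_rpow_atTop (2 * a + 3 / 2) ha).tendsto_div_nhds_zero.congr' ?_
  filter_upwards [eventually_gt_atTop 1] with x hx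
  have hx0 : 0 < x := by linarith
  have hL : 0 < log x := log_pos hx
  have hxpow : x ^ (2 * a + 1) = x ^ (1 + a) * x ^ a := by rw [← rpow_add hx0]; ring_nf
  have hLpow : log x ^ (2 * a + 3 / 2) = log x ^ (1 / 2 : ℝ) * log x ^ (2 * a + 1) := by
    rw [← rpow_add hL]; ring_nf
  rw [div_rpow hx0.le hL.le, sqrt_eq_rpow, hxpow, hLpow]
  field_simp

lemma exists_eventually_rpow_one_add_sq_div_two_le (m : ℕ) {α z : ℝ} {p : ℕ → ℕ}
    (hp : Tendsto p atTop atTop)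
    (hpoly : (fun n => (p n : ℝ)) =O[atTop] (fun n => (n : ℝ) ^ α)) {ν c : ℕ → ℝ}
    (hν : ∀ n, ν n = √(log (p n) - (1 / (2 * m)) *
      (log (log (p n)) + 2 * log (Nat.factorial m * √(m * π)) - z)))
    (hc : ∀ n, c n = √(2 * m / log n) * ν n) :
    ∃ K, ∀ᶠ n : ℕ in atTop, (n : ℝ) ^ (1 + c n ^ 2 / 2) ≤ K * (n : ℝ) ^ (1 + m * α) := by
  obtain ⟨K, hK0, hKO⟩ := hpoly.exists_pos
  have hloglog : Tendsto (fun n => log (log (p n))) atTop atTop :=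
    tendsto_log_atTop.comp (tendsto_log_atTop.comp (tendsto_natCast_atTop_atTop.comp hp))
  refine ⟨K ^ (m : ℝ), ?_⟩
  filter_upwards [eventually_gt_atTop 1, hKO.bound, hp.eventually_ge_atTop 1,
    hloglog.eventually_ge_atTop (z - 2 * log (Nat.factorial m * √(m * π)))]
    with n hn hKn hp1 hlog
  have hn' : (1 : ℝ) < n := by exact_mod_cast hn
  have hp0 : (0 : ℝ) < p n := by exact_mod_cast hp1
  rw [norm_natCast, norm_rpow_of_nonneg (Nat.cast_nonneg n), norm_natCast] at hKn
  have hν2 : ν n ^ 2 ≤ log (p n) := by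
    have : 0 ≤ 1 / (2 * (m : ℝ)) *
        (log (log (p n)) + 2 * log (Nat.factorial m * √(m * π)) - z) :=
      mul_nonneg (by positivity) (by linarith)
    calc ν n ^ 2 ≤ √(log (p n)) ^ 2 := by rw [hν n]; gcongr; linarith
      _ = log (p n) := sq_sqrt (log_nonneg (by exact_mod_cast hp1))
  calc (n : ℝ) ^ (1 + c n ^ 2 / 2) = n * exp (m * ν n ^ 2) := by
        rw [hc n]; exact rpow_one_add_sq_div_two_eq hn' (Nat.cast_nonneg m) _
    _ ≤ n * (p n : ℝ) ^ (m : ℝ) := by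
        rw [rpow_def_of_pos hp0, mul_comm (log _)]
        gcongr
    _ ≤ n * (K * (n : ℝ) ^ α) ^ (m : ℝ) := by gcongr
    _ = K ^ (m : ℝ) * (n : ℝ) ^ (1 + m * α) := by
        rw [mul_rpow hK0.le (by positivity), ← rpow_mul (Nat.cast_nonneg n),
          rpow_add (by linarith), rpow_one, mul_comm α]
        ring

theorem product_tail_vanishes_high_dim_general
    {Ω : Type*} [MeasureSpace Ω] [IsProbabilityMeasure (ℙ : Measure Ω)]
    (x : ℕ → ℕ → Ω → ℝ)
    (hmeas : ∀ k i, Measurable (x k i))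
    (hindep : iIndepFun
      (fun ki : ℕ × ℕ => x ki.1 ki.2) ℙ)
    (hident : ∀ k i, IdentDistrib (x k i) (x 0 0) ℙ ℙ)
    (m : ℕ) (hm : 2 ≤ m)
    (α : ℝ) (hα : 0 < α)
    (hmom : Integrable (fun ω =>
      |x 0 0 ω| ^ (4 * m * α + 2) * (Real.log (1 + |x 0 0 ω|)) ^ (2 * m * α + 3 / 2)) ℙ)
    (p : ℕ → ℕ) (hp : Tendsto p atTop atTop)
    (hpoly : (fun n => (p n : ℝ)) =O[atTop] (fun n => (n : ℝ) ^ α))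
    (z : ℝ) (ν c : ℕ → ℝ)
    (hν : ∀ n, ν n = Real.sqrt (Real.log (p n) - (1 / (2 * m)) *
      (Real.log (Real.log (p n)) + 2 * Real.log (Nat.factorial m * Real.sqrt (m * π)) - z)))
    (hc : ∀ n, c n = Real.sqrt (2 * m / Real.log n) * ν n) :
    Tendsto (fun n : ℕ => (n : ℝ) ^ (1 + (c n) ^ 2 / 2) * Real.sqrt (Real.log n) *
        (ℙ {ω | Real.sqrt (n / Real.log n) < |∏ t ∈ Finset.range m, x 0 t ω|}).toReal)
      atTop (nhds 0) := by
  have hmα : 0 < (m : ℝ) * α := mul_pos (by exact_mod_cast (by omega : 0 < m)) hα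
  set r : ℝ := 2 * (m * α) + 1
  rw [show (4 * m * α + 2 : ℝ) = 2 * r by ring] at hmom
  have hx00 := integrable_abs_rpow_of_integrable_abs_rpow_mul_log_rpow
    (hmeas 0 0).aestronglyMeasurable (by positivity) (by positivity) hmom
  have hrow := iIndepFun.integrable_abs_finsetProd_rpow
    (hindep.precomp (g := fun t => (0, t)) fun _ _ h => (Prod.mk.inj h).2) (hmeas 0)
    (fun t => ((hident 0 t).comp (measurable_abs.pow_const _)).integrable_iff.2 hx00)
    (Finset.range m)
  set M := ∫ ω, |∏ t ∈ Finset.range m, x 0 t ω| ^ (2 * r) ∂ℙ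
  obtain ⟨K, hK⟩ := exists_eventually_rpow_one_add_sq_div_two_le m hp hpoly hν hc
  have hlim := ((tendsto_rpow_mul_sqrt_log_div_rpow_div_log hmα).comp
    tendsto_natCast_atTop_atTop).const_mul (K * M)
  refine squeeze_zero' (Eventually.of_forall fun n => by positivity) ?_ (by simpa using hlim)
  filter_upwards [hK, eventually_gt_atTop 1] with n hKn hn
  have hmarkov := measureReal_sqrt_lt_abs_le_integral_rpow_div (by positivity) hrow
    (div_pos (by positivity) (log_pos (by exact_mod_cast hn)) : 0 < (n : ℝ) / log n)
  have hgrowth := mul_le_mul_of_nonneg_right hKn (sqrt_nonneg (log n))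
  calc _ ≤ K * (n : ℝ) ^ (1 + m * α) * √(log n) * (M / ((n : ℝ) / log n) ^ r) :=
        mul_le_mul hgrowth hmarkov ENNReal.toReal_nonneg (le_trans (by positivity) hgrowth)
    _ = _ := by ring

/-- Lemma 5: under the assumptions of Theorem 2, with `ν_p` and `cₙ = √(2m/log n)·ν_p`,
`n^{1+cₙ²/2} √(log n) · P(|ξ₁| > √(n/log n)) → 0`, where `ξ₁ = x₁₁ x₁₂ ⋯ x₁ₘ`. -/
theorem product_tail_vanishes_high_dim
    {Ω : Type*} [MeasureSpace Ω] [IsProbabilityMeasure (ℙ : Measure Ω)]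
    (x : ℕ → ℕ → Ω → ℝ)
    (hmeas : ∀ k i, Measurable (x k i))
    (hindep : iIndepFun
      (fun ki : ℕ × ℕ => x ki.1 ki.2) ℙ)
    (hident : ∀ k i, IdentDistrib (x k i) (x 0 0) ℙ ℙ)
    (hmean : ∫ ω, x 0 0 ω ∂ℙ = 0)
    (hvar : ∫ ω, (x 0 0 ω) ^ 2 ∂ℙ = 1)
    (m : ℕ) (hm : 2 ≤ m)
    (α : ℝ) (hα : 0 < α)
    (hmom : Integrable (fun ω =>
      |x 0 0 ω| ^ (4 * m * α + 2) * (Real.log (1 + |x 0 0 ω|)) ^ (2 * m * α + 3 / 2)) ℙ)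
    (p : ℕ → ℕ) (hp : Tendsto p atTop atTop)
    (hpoly : (fun n => (p n : ℝ)) =O[atTop] (fun n => (n : ℝ) ^ α))
    (z : ℝ) (ν c : ℕ → ℝ)
    (hν : ∀ n, ν n = Real.sqrt (Real.log (p n) - (1 / (2 * m)) *
      (Real.log (Real.log (p n)) + 2 * Real.log (Nat.factorial m * Real.sqrt (m * π)) - z)))
    (hc : ∀ n, c n = Real.sqrt (2 * m / Real.log n) * ν n) :
    Tendsto (fun n : ℕ => (n : ℝ) ^ (1 + (c n) ^ 2 / 2) * Real.sqrt (Real.log n) *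
        (ℙ {ω | Real.sqrt (n / Real.log n) < |∏ t ∈ Finset.range m, x 0 t ω|}).toReal)
      atTop (nhds 0) :=
  product_tail_vanishes_high_dim_general x hmeas hindep hident m hm α hα hmom p hp hpoly z ν c hν hc
end

section
/- Let ξ be a real random variable with E ξ = 0 and E|ξ|^r ≤ K < ∞ for some r > 2. For a > 0, define the truncated and centered variable ξ' = ξ·1{|ξ| ≤ a} - E[ξ·1{|ξ| ≤ a}]. Then Var(ξ) ≥ Var(ξ') ≥ Var(ξ) - 3K/a^{r-2}. -/
open MeasureTheory ProbabilityTheory Real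

/-!
Write `ξ = g + h` with `g = ξ·1{|ξ| ≤ a}` and the tail `h = ξ·1{|ξ| > a}`. As `g h = 0` and
`E g = -E h`, the covariance term is `(E h)²`, so `Var ξ = Var g + E h² + (E h)²`, while
`Var ξ' = Var g`. The loss `E h² + (E h)²` lies in `[0, 2 E h²]`, and on `{|ξ| > a}` we have
`ξ² ≤ |ξ|^r / a^(r-2)`, so `E h² ≤ K / a^(r-2)`.
-/

lemma memLp_two_of_integrable_abs_rpow {Ω : Type*} {mΩ : MeasurableSpace Ω} {μ : Measure Ω}
    [IsFiniteMeasure μ] {X : Ω → ℝ} {r : ℝ} (hr : 2 ≤ r) (hX : AEStronglyMeasurable X μ)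
    (hint : Integrable (fun ω ↦ |X ω| ^ r) μ) : MemLp X 2 μ := by
  have hr0 : 0 < r := by linarith
  have hLr : MemLp X (ENNReal.ofReal r) μ := by
    rw [← integrable_norm_rpow_iff hX (by simpa using hr0) ENNReal.ofReal_ne_top,
      ENNReal.toReal_ofReal hr0.le]
    simpa only [Real.norm_eq_abs] using hint
  exact hLr.mono_exponent (by simpa using ENNReal.ofReal_le_ofReal hr)

lemma sq_mul_rpow_sub_two_le_abs_rpow {x a r : ℝ} (ha : 0 ≤ a) (hax : a ≤ |x|) (hr : 2 ≤ r) :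
    x ^ 2 * a ^ (r - 2) ≤ |x| ^ r := by
  calc x ^ 2 * a ^ (r - 2) ≤ |x| ^ (2 : ℝ) * |x| ^ (r - 2) := by
        rw [rpow_two, sq_abs]
        gcongr
    _ = |x| ^ r := by
        rw [← rpow_add' (abs_nonneg x) (by linarith)]
        ring_nf

lemma integral_tail_sq_le_moment_div_rpow {Ω : Type*} {mΩ : MeasurableSpace Ω} {μ : Measure Ω}
    {X : Ω → ℝ} {a r : ℝ} (ha : 0 < a) (hr : 2 ≤ r)
    (hint : Integrable (fun ω ↦ |X ω| ^ r) μ) :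
    ∫ ω, (if |X ω| ≤ a then 0 else X ω) ^ 2 ∂μ ≤ (∫ ω, |X ω| ^ r ∂μ) / a ^ (r - 2) := by
  have hc : 0 < a ^ (r - 2) := rpow_pos_of_pos ha _
  rw [← integral_div]
  refine integral_mono_of_nonneg (.of_forall fun ω ↦ sq_nonneg _) (hint.div_const _)
    (.of_forall fun ω ↦ ?_)
  dsimp only
  split_ifs with hXa
  · rw [zero_pow two_ne_zero]
    positivity
  · rw [le_div_iff₀ hc]
    exact sq_mul_rpow_sub_two_le_abs_rpow ha.le (not_le.1 hXa).le hr

lemma variance_add_of_mul_eq_zero {Ω : Type*} {mΩ : MeasurableSpace Ω} {μ : Measure Ω}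
    [IsProbabilityMeasure μ] {X Y : Ω → ℝ} (hX : MemLp X 2 μ) (hY : MemLp Y 2 μ)
    (hXY : X * Y = 0) (hmean : μ[X + Y] = 0) :
    Var[X + Y; μ] = Var[X; μ] + μ[Y ^ 2] + μ[Y] ^ 2 := by
  have hXmean : μ[X] = -μ[Y] := by
    rw [integral_add' (hX.integrable one_le_two) (hY.integrable one_le_two)] at hmean
    linarith
  rw [variance_add hX hY, covariance_eq_sub hX hY, variance_eq_sub hY, hXY, hXmean]
  simp only [Pi.zero_apply, integral_zero]
  ring

/-- Variance loss under truncation: if `E ξ = 0` and `E|ξ|^r ≤ K` for some `r > 2`, then the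
truncated, centered variable `ξ' = ξ·1{|ξ| ≤ a} - E[ξ·1{|ξ| ≤ a}]` satisfies
`Var(ξ) ≥ Var(ξ') ≥ Var(ξ) - 3K/a^{r-2}`. -/
theorem variance_of_truncation
    {Ω : Type*} [MeasureSpace Ω] [IsProbabilityMeasure (ℙ : Measure Ω)]
    (ξ : Ω → ℝ) (hmeas : Measurable ξ)
    (hmean : ∫ ω, ξ ω ∂ℙ = 0)
    (r K : ℝ) (hr : 2 < r)
    (hint : Integrable (fun ω => |ξ ω| ^ r) ℙ)
    (hK : ∫ ω, |ξ ω| ^ r ∂ℙ ≤ K)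
    (a : ℝ) (ha : 0 < a)
    (ξ' : Ω → ℝ)
    (hξ' : ∀ ω, ξ' ω = (if |ξ ω| ≤ a then ξ ω else 0)
      - ∫ ω', (if |ξ ω'| ≤ a then ξ ω' else 0) ∂ℙ) :
    variance ξ' ℙ ≤ variance ξ ℙ ∧
      variance ξ ℙ - 3 * K / a ^ (r - 2) ≤ variance ξ' ℙ := by
  set g : Ω → ℝ := fun ω ↦ if |ξ ω| ≤ a then ξ ω else 0
  set h : Ω → ℝ := fun ω ↦ if |ξ ω| ≤ a then 0 else ξ ω
  have hsplit : ξ = g + h := by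
    ext ω; by_cases hξa : |ξ ω| ≤ a <;> simp [g, h, hξa]
  have hdisj : g * h = 0 := by
    ext ω; by_cases hξa : |ξ ω| ≤ a <;> simp [g, h, hξa]
  have hξ2 : MemLp ξ 2 ℙ := memLp_two_of_integrable_abs_rpow hr.le hmeas.aestronglyMeasurable hint
  have hg2 : MemLp g 2 ℙ := by
    have hmeas_g : Measurable g :=
      Measurable.ite (measurableSet_le hmeas.abs measurable_const) hmeas measurable_const
    refine MemLp.of_bound hmeas_g.aestronglyMeasurable a (.of_forall fun ω ↦ ?_)
    by_cases hξa : |ξ ω| ≤ a <;> simp [g, hξa, ha.le]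
  have hh2 : MemLp h 2 ℙ := by
    simpa [hsplit] using hξ2.sub hg2
  have hvar' : variance ξ' ℙ = variance g ℙ := by
    rw [funext hξ']
    exact variance_sub_const hg2.1 _
  have hdecomp : variance ξ ℙ = variance g ℙ + ∫ ω, h ω ^ 2 ∂ℙ + (∫ ω, h ω ∂ℙ) ^ 2 := by
    rw [hsplit]
    exact variance_add_of_mul_eq_zero hg2 hh2 hdisj (hsplit ▸ hmean)
  have hmean_sq : (∫ ω, h ω ∂ℙ) ^ 2 ≤ ∫ ω, h ω ^ 2 ∂ℙ := by
    have hvar_h := variance_nonneg h ℙ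
    rw [variance_eq_sub hh2] at hvar_h
    simpa using hvar_h
  have htail : ∫ ω, h ω ^ 2 ∂ℙ ≤ K / a ^ (r - 2) :=
    (integral_tail_sq_le_moment_div_rpow ha hr.le hint).trans (by gcongr)
  have hK0 : 0 ≤ K := (integral_nonneg fun ω ↦ by positivity).trans hK
  have hKa : 0 ≤ K / a ^ (r - 2) := by positivity
  rw [mul_div_assoc]
  constructor <;> linarith [sq_nonneg (∫ ω, h ω ∂ℙ)]
end

section
/- Let m ≥ 1 be an integer, let τ₁ > 0 and τ₂ ≥ 1, and define g(x) = x^{τ₁} log^{τ₂}(1+x) for x ≥ 0. Let x₁, …, x_m be i.i.d. real random variables with E[|x₁|^{τ₁} log^{τ₂}(1+|x₁|)] < ∞. Then E g(|x₁ x₂ ⋯ x_m|) ≤ m^{τ₂} · E[|x₁|^{τ₁} log^{τ₂}(1+|x₁|)] · (E|x₁|^{τ₁})^{m-1} < ∞. -/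
/-!
For `aᵢ ≥ 0`, `1 + ∏ aᵢ ≤ ∏ (1 + aᵢ)` gives `log (1 + ∏ aᵢ) ≤ ∑ log (1 + aᵢ)`, and convexity of
`t ↦ t ^ τ₂` then bounds `g (∏ aᵢ)` pointwise by `m ^ (τ₂ - 1) ∑ⱼ (∏ᵢ aᵢ ^ τ₁) log (1 + aⱼ) ^ τ₂`.
At `aᵢ = |xᵢ|`, independence factors the expectation of the `j`-th summand as
`E g(|x₁|) · (E |x₁| ^ τ₁) ^ (m - 1)`, and there are `m` summands.
-/

open MeasureTheory ProbabilityTheory Filter Real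

namespace Finset

theorem one_add_prod_le_prod_one_add {ι R : Type*} [CommSemiring R] [PartialOrder R]
    [IsOrderedRing R] {s : Finset ι} (hs : s.Nonempty) {a : ι → R} (ha : ∀ i ∈ s, 0 ≤ a i) :
    1 + ∏ i ∈ s, a i ≤ ∏ i ∈ s, (1 + a i) := by
  induction hs using Nonempty.cons_induction with
  | singleton i => simp
  | cons i s hi hs ih =>
    have hai : 0 ≤ a i := ha i (mem_cons_self i s)
    have ha' : ∀ j ∈ s, 0 ≤ a j := fun j hj => ha j (mem_cons_of_mem hj)
    rw [prod_cons, prod_cons]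
    calc 1 + a i * ∏ j ∈ s, a j
        ≤ 1 + a i * ∏ j ∈ s, a j + (a i + ∏ j ∈ s, a j) :=
          le_add_of_nonneg_right (add_nonneg hai (prod_nonneg ha'))
      _ = (1 + a i) * (1 + ∏ j ∈ s, a j) := by ring
      _ ≤ (1 + a i) * ∏ j ∈ s, (1 + a j) :=
          mul_le_mul_of_nonneg_left (ih ha') (add_nonneg zero_le_one hai)

end Finset

namespace Real

theorem log_one_add_prod_le_sum_log_one_add {ι : Type*} {s : Finset ι} (hs : s.Nonempty)
    {a : ι → ℝ} (ha : ∀ i ∈ s, 0 ≤ a i) :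
    log (1 + ∏ i ∈ s, a i) ≤ ∑ i ∈ s, log (1 + a i) := by
  rw [← log_prod fun i hi => by linarith [ha i hi]]
  exact log_le_log (by linarith [Finset.prod_nonneg ha]) (s.one_add_prod_le_prod_one_add hs ha)

theorem log_one_add_abs_prod_rpow_le {ι : Type*} {s : Finset ι} (hs : s.Nonempty) (y : ι → ℝ)
    {τ : ℝ} (hτ : 1 ≤ τ) :
    log (1 + |∏ t ∈ s, y t|) ^ τ ≤ (s.card : ℝ) ^ (τ - 1) * ∑ t ∈ s, log (1 + |y t|) ^ τ := by
  rw [Finset.abs_prod]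
  calc log (1 + ∏ t ∈ s, |y t|) ^ τ
      ≤ (∑ t ∈ s, log (1 + |y t|)) ^ τ := by
        gcongr
        · exact log_nonneg (by simp [Finset.prod_nonneg])
        · exact log_one_add_prod_le_sum_log_one_add hs fun t _ => abs_nonneg (y t)
    _ ≤ _ := rpow_sum_le_const_mul_sum_rpow_of_nonneg s hτ fun t _ => log_nonneg (by simp)

theorem abs_prod_rpow_mul_log_rpow_le {ι : Type*} {s : Finset ι} (hs : s.Nonempty) (y : ι → ℝ)
    (τ₁ : ℝ) {τ₂ : ℝ} (hτ₂ : 1 ≤ τ₂) :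
    |∏ t ∈ s, y t| ^ τ₁ * log (1 + |∏ t ∈ s, y t|) ^ τ₂ ≤
      (s.card : ℝ) ^ (τ₂ - 1) * ∑ j ∈ s, (∏ t ∈ s, |y t| ^ τ₁) * log (1 + |y j|) ^ τ₂ := by
  calc |∏ t ∈ s, y t| ^ τ₁ * log (1 + |∏ t ∈ s, y t|) ^ τ₂
      ≤ |∏ t ∈ s, y t| ^ τ₁ * ((s.card : ℝ) ^ (τ₂ - 1) * ∑ j ∈ s, log (1 + |y j|) ^ τ₂) :=
        mul_le_mul_of_nonneg_left (log_one_add_abs_prod_rpow_le hs y hτ₂) (by positivity)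
    _ = _ := by
        rw [Finset.abs_prod, finsetProd_rpow _ _ fun t _ => abs_nonneg (y t), Finset.mul_sum,
          Finset.mul_sum, Finset.mul_sum]
        exact Finset.sum_congr rfl fun j _ => by ring

theorem rpow_le_exp_add_rpow_mul_log_rpow {a τ₁ τ₂ : ℝ} (ha : 0 ≤ a) (hτ₁ : 0 ≤ τ₁)
    (hτ₂ : 0 ≤ τ₂) : a ^ τ₁ ≤ exp τ₁ + a ^ τ₁ * log (1 + a) ^ τ₂ := by
  have hlog : 0 ≤ log (1 + a) := log_nonneg (by linarith)
  rcases le_or_gt a (exp 1) with hae | hae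
  · have : a ^ τ₁ ≤ exp τ₁ := by
      rw [← exp_one_rpow]
      exact rpow_le_rpow ha hae hτ₁
    have := mul_nonneg (rpow_nonneg ha τ₁) (rpow_nonneg hlog τ₂)
    linarith
  · have hlog1 : 1 ≤ log (1 + a) := by
      rw [le_log_iff_exp_le (by linarith)]
      linarith
    have := le_mul_of_one_le_right (rpow_nonneg ha τ₁) (one_le_rpow hlog1 hτ₂)
    linarith [exp_pos τ₁]

end Real

section

variable {Ω ι : Type*} [MeasurableSpace Ω] {μ : Measure Ω}

theorem MeasureTheory.Integrable.abs_rpow_of_abs_rpow_mul_log_rpow [IsFiniteMeasure μ]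
    {f : Ω → ℝ} {τ₁ τ₂ : ℝ} (h : Integrable (fun ω => |f ω| ^ τ₁ * log (1 + |f ω|) ^ τ₂) μ)
    (hf : AEMeasurable f μ) (hτ₁ : 0 ≤ τ₁) (hτ₂ : 0 ≤ τ₂) :
    Integrable (fun ω => |f ω| ^ τ₁) μ := by
  refine ((integrable_const (exp τ₁)).add h).mono' (by fun_prop)
    (Eventually.of_forall fun ω => ?_)
  rw [norm_of_nonneg (rpow_nonneg (abs_nonneg _) _)]
  exact rpow_le_exp_add_rpow_mul_log_rpow (abs_nonneg _) hτ₁ hτ₂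

namespace ProbabilityTheory.iIndepFun

theorem integrable_finset_prod {X : ι → Ω → ℝ} (hX : iIndepFun X μ)
    (hint : ∀ i, Integrable (X i) μ) (s : Finset ι) :
    Integrable (fun ω => ∏ i ∈ s, X i ω) μ := by
  classical
  have := hX.isProbabilityMeasure
  induction s using Finset.induction_on with
  | empty => simp
  | insert a s ha ih =>
    simp_rw [Finset.prod_insert ha, mul_comm (X a _)]
    have hind := hX.indepFun_finsetProd_of_notMem₀ (fun i => (hint i).aemeasurable) ha
    simp only [Finset.prod_fn] at hind
    exact hind.integrable_mul ih (hint a)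

theorem integral_finset_prod {X : ι → Ω → ℝ} (hX : iIndepFun X μ)
    (hint : ∀ i, Integrable (X i) μ) (s : Finset ι) :
    ∫ ω, ∏ i ∈ s, X i ω ∂μ = ∏ i ∈ s, ∫ ω, X i ω ∂μ := by
  classical
  have := hX.isProbabilityMeasure
  induction s using Finset.induction_on with
  | empty => simp
  | insert a s ha ih =>
    simp_rw [Finset.prod_insert ha, mul_comm (X a _)]
    have hind := hX.indepFun_finsetProd_of_notMem₀ (fun i => (hint i).aemeasurable) ha
    simp only [Finset.prod_fn] at hind
    rw [hind.integral_fun_mul_eq_mul_integral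
      (hX.integrable_finset_prod hint s).aestronglyMeasurable (hint a).aestronglyMeasurable, ih,
      mul_comm]

theorem integrable_and_integral_prod_comp_mul_comp {x : ι → Ω → ℝ} {i₀ : ι}
    (hx : iIndepFun x μ) (hident : ∀ i, IdentDistrib (x i) (x i₀) μ μ) {p q : ℝ → ℝ}
    (hp : Measurable p) (hq : Measurable q) (hp_int : Integrable (fun ω => p (x i₀ ω)) μ)
    (hpq_int : Integrable (fun ω => p (x i₀ ω) * q (x i₀ ω)) μ) {s : Finset ι} {j : ι}
    (hj : j ∈ s) :
    Integrable (fun ω => (∏ t ∈ s, p (x t ω)) * q (x j ω)) μ ∧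
      ∫ ω, (∏ t ∈ s, p (x t ω)) * q (x j ω) ∂μ =
        (∫ ω, p (x i₀ ω) * q (x i₀ ω) ∂μ) * (∫ ω, p (x i₀ ω) ∂μ) ^ (s.card - 1) := by
  classical
  set f : ι → ℝ → ℝ := fun t => if t = j then p * q else p
  have hf : ∀ t, Measurable (f t) := fun t => by
    by_cases ht : t = j <;> simp only [f, ht, if_true, if_false, hp.mul hq, hp]
  have hint : ∀ t, Integrable (fun ω => f t (x t ω)) μ := fun t =>
    ((hident t).comp (hf t)).integrable_iff.2 (by by_cases ht : t = j <;> simpa [f, ht])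
  have hprod : (fun ω => (∏ t ∈ s, p (x t ω)) * q (x j ω)) = fun ω => ∏ t ∈ s, f t (x t ω) := by
    have hfac : ∀ t u, f t u = p u * if t = j then q u else 1 := fun t u => by
      by_cases ht : t = j <;> simp [f, ht]
    ext ω
    simp_rw [hfac, Finset.prod_mul_distrib, Finset.prod_ite_eq' s j, if_pos hj]
  have hmoment : ∀ t, ∫ ω, f t (x t ω) ∂μ = ∫ ω, f t (x i₀ ω) ∂μ := fun t =>
    ((hident t).comp (hf t)).integral_eq
  have hA : ∫ ω, f j (x j ω) ∂μ = ∫ ω, p (x i₀ ω) * q (x i₀ ω) ∂μ := by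
    rw [hmoment]; simp [f]
  have hB : ∀ t ∈ s.erase j, ∫ ω, f t (x t ω) ∂μ = ∫ ω, p (x i₀ ω) ∂μ := fun t ht => by
    rw [hmoment]; simp [f, Finset.ne_of_mem_erase ht]
  have hfx : iIndepFun (fun t ω => f t (x t ω)) μ := hx.comp f hf
  rw [hprod]
  refine ⟨hfx.integrable_finset_prod hint s, ?_⟩
  rw [hfx.integral_finset_prod hint s, ← Finset.mul_prod_erase s _ hj, hA,
    Finset.prod_congr rfl hB, Finset.prod_const, Finset.card_erase_of_mem hj]

end ProbabilityTheory.iIndepFun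

end

theorem g_moment_of_product_general
    {Ω : Type*} [MeasureSpace Ω] [IsProbabilityMeasure (ℙ : Measure Ω)]
    (m : ℕ) (hm : 1 ≤ m)
    (τ₁ τ₂ : ℝ) (hτ₁ : 0 < τ₁) (hτ₂ : 1 ≤ τ₂)
    (x : ℕ → Ω → ℝ)
    (hindep : iIndepFun x ℙ)
    (hident : ∀ i, IdentDistrib (x i) (x 0) ℙ ℙ)
    (hmom : Integrable (fun ω => |x 0 ω| ^ τ₁ * (Real.log (1 + |x 0 ω|)) ^ τ₂) ℙ) :
    Integrable (fun ω => |∏ t ∈ Finset.range m, x t ω| ^ τ₁ *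
      (Real.log (1 + |∏ t ∈ Finset.range m, x t ω|)) ^ τ₂) ℙ ∧
    ∫ ω, |∏ t ∈ Finset.range m, x t ω| ^ τ₁ *
        (Real.log (1 + |∏ t ∈ Finset.range m, x t ω|)) ^ τ₂ ∂ℙ ≤
      (m : ℝ) ^ τ₂ * (∫ ω, |x 0 ω| ^ τ₁ * (Real.log (1 + |x 0 ω|)) ^ τ₂ ∂ℙ) *
        (∫ ω, |x 0 ω| ^ τ₁ ∂ℙ) ^ (m - 1) := by
  have hp_int := hmom.abs_rpow_of_abs_rpow_mul_log_rpow (hident 0).aemeasurable_fst hτ₁.le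
    (by linarith)
  have hsummand j (hj : j ∈ Finset.range m) :=
    hindep.integrable_and_integral_prod_comp_mul_comp hident (p := fun u => |u| ^ τ₁)
      (q := fun u => log (1 + |u|) ^ τ₂) (by fun_prop) (by fun_prop) hp_int hmom hj
  set G : Ω → ℝ := fun ω => (m : ℝ) ^ (τ₂ - 1) *
    ∑ j ∈ Finset.range m, (∏ t ∈ Finset.range m, |x t ω| ^ τ₁) * log (1 + |x j ω|) ^ τ₂
  have hG_int : Integrable G ℙ :=
    (integrable_finsetSum _ fun j hj => (hsummand j hj).1).const_mul _
  have hbound ω : |∏ t ∈ Finset.range m, x t ω| ^ τ₁ *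
      log (1 + |∏ t ∈ Finset.range m, x t ω|) ^ τ₂ ≤ G ω := by
    simpa using abs_prod_rpow_mul_log_rpow_le (Finset.nonempty_range_iff.2 (by omega))
      (x · ω) τ₁ hτ₂
  have hmeas : AEStronglyMeasurable (fun ω => |∏ t ∈ Finset.range m, x t ω| ^ τ₁ *
      log (1 + |∏ t ∈ Finset.range m, x t ω|) ^ τ₂) ℙ :=
    ((by fun_prop : Measurable fun u : ℝ => |u| ^ τ₁ * log (1 + |u|) ^ τ₂).comp_aemeasurable
      (Finset.aemeasurable_fun_prod _ fun t _ => (hident t).aemeasurable_fst)).aestronglyMeasurable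
  have h_int := hG_int.mono' hmeas (Eventually.of_forall fun ω => by
    rw [norm_of_nonneg (mul_nonneg (by positivity) (rpow_nonneg (log_nonneg (by simp)) _))]
    exact hbound ω)
  refine ⟨h_int, (integral_mono h_int hG_int hbound).trans_eq ?_⟩
  rw [integral_const_mul, integral_finsetSum _ fun j hj => (hsummand j hj).1,
    Finset.sum_congr rfl fun j hj => (hsummand j hj).2, Finset.sum_const, Finset.card_range,
    nsmul_eq_mul, rpow_sub_one (by positivity)]
  field_simp

/-- Moment bound for a product of i.i.d. variables: with `g(x) = x^{τ₁} log^{τ₂}(1+x)`,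
`E g(|x₁ ⋯ xₘ|) ≤ m^{τ₂} · E[|x₁|^{τ₁} log^{τ₂}(1+|x₁|)] · (E|x₁|^{τ₁})^{m-1} < ∞`. -/
theorem g_moment_of_product
    {Ω : Type*} [MeasureSpace Ω] [IsProbabilityMeasure (ℙ : Measure Ω)]
    (m : ℕ) (hm : 1 ≤ m)
    (τ₁ τ₂ : ℝ) (hτ₁ : 0 < τ₁) (hτ₂ : 1 ≤ τ₂)
    (x : ℕ → Ω → ℝ)
    (hmeas : ∀ i, Measurable (x i))
    (hindep : iIndepFun x ℙ)
    (hident : ∀ i, IdentDistrib (x i) (x 0) ℙ ℙ)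
    (hmom : Integrable (fun ω => |x 0 ω| ^ τ₁ * (Real.log (1 + |x 0 ω|)) ^ τ₂) ℙ) :
    Integrable (fun ω => |∏ t ∈ Finset.range m, x t ω| ^ τ₁ *
      (Real.log (1 + |∏ t ∈ Finset.range m, x t ω|)) ^ τ₂) ℙ ∧
    ∫ ω, |∏ t ∈ Finset.range m, x t ω| ^ τ₁ *
        (Real.log (1 + |∏ t ∈ Finset.range m, x t ω|)) ^ τ₂ ∂ℙ ≤
      (m : ℝ) ^ τ₂ * (∫ ω, |x 0 ω| ^ τ₁ * (Real.log (1 + |x 0 ω|)) ^ τ₂ ∂ℙ) *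
        (∫ ω, |x 0 ω| ^ τ₁ ∂ℙ) ^ (m - 1) :=
  g_moment_of_product_general m hm τ₁ τ₂ hτ₁ hτ₂ x hindep hident hmom
end

section
/- Let τ₁ > 2 and τ₂ > 3/2 be real numbers and define g(x) = x^{τ₁} log^{τ₂}(1+x) for x ≥ 0. Then g is a convex function on [0, ∞). -/
/-!
Writing `L = log (1 + x)`, the derivative of `x ^ a * L ^ b` on `x > 0` is
`a * x ^ (a - 1) * L ^ b + b * x ^ (a - 1) * L ^ (b - 1) * (x / (1 + x))`.
For `a, b ≥ 1` every factor is nonnegative and nondecreasing on `[0, ∞)`, so the derivative is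
monotone and the function is convex.
-/

open Real Set

lemma hasDerivAt_rpow_mul_log_one_add_rpow (a b : ℝ) {x : ℝ} (hx : 0 < x) :
    HasDerivAt (fun x => x ^ a * log (1 + x) ^ b)
      (a * x ^ (a - 1) * log (1 + x) ^ b
        + b * x ^ (a - 1) * log (1 + x) ^ (b - 1) * (x / (1 + x))) x := by
  have hlog : HasDerivAt (fun x => log (1 + x)) (1 / (1 + x)) x :=
    ((hasDerivAt_id x).const_add 1).log (by positivity)
  refine ((hasDerivAt_rpow_const (p := a) (.inl hx.ne')).mul
    (hlog.rpow_const (p := b) (.inl (log_pos (by linarith)).ne'))).congr_deriv ?_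
  rw [rpow_sub_one hx.ne']
  field_simp

lemma continuousOn_rpow_mul_log_one_add_rpow {a b : ℝ} (ha : 0 ≤ a) (hb : 0 ≤ b) :
    ContinuousOn (fun x => x ^ a * log (1 + x) ^ b) (Ici 0) := by
  refine (continuous_rpow_const ha).continuousOn.mul
    ((continuous_rpow_const hb).comp_continuousOn ?_)
  exact ContinuousOn.log (by fun_prop) fun x (hx : 0 ≤ x) => by positivity

lemma div_one_add_le_div_one_add {x y : ℝ} (hx : 0 ≤ x) (hxy : x ≤ y) :
    x / (1 + x) ≤ y / (1 + y) := by
  rw [div_le_div_iff₀ (by positivity) (by linarith)]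
  linarith

lemma monotoneOn_deriv_rpow_mul_log_one_add_rpow {a b : ℝ} (ha : 1 ≤ a) (hb : 1 ≤ b) :
    MonotoneOn (fun x => a * x ^ (a - 1) * log (1 + x) ^ b
        + b * x ^ (a - 1) * log (1 + x) ^ (b - 1) * (x / (1 + x))) (Ici 0) := by
  intro x (hx : 0 ≤ x) y (hy : 0 ≤ y) hxy
  have hfrac := div_one_add_le_div_one_add hx hxy
  have hlog_x : 0 ≤ log (1 + x) := log_nonneg (by linarith)
  have hlog_y : 0 ≤ log (1 + y) := log_nonneg (by linarith)
  dsimp only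
  gcongr

theorem convexOn_rpow_mul_log_one_add_rpow {a b : ℝ} (ha : 1 ≤ a) (hb : 1 ≤ b) :
    ConvexOn ℝ (Ici 0) (fun x => x ^ a * log (1 + x) ^ b) := by
  have hderiv : ∀ x ∈ interior (Ici (0 : ℝ)), HasDerivAt (fun x => x ^ a * log (1 + x) ^ b)
      (a * x ^ (a - 1) * log (1 + x) ^ b
        + b * x ^ (a - 1) * log (1 + x) ^ (b - 1) * (x / (1 + x))) x := by
    rw [interior_Ici]
    exact fun x hx => hasDerivAt_rpow_mul_log_one_add_rpow a b hx
  refine MonotoneOn.convexOn_of_deriv (convex_Ici 0)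
    (continuousOn_rpow_mul_log_one_add_rpow (by linarith) (by linarith))
    (fun x hx => (hderiv x hx).differentiableAt.differentiableWithinAt) ?_
  exact ((monotoneOn_deriv_rpow_mul_log_one_add_rpow ha hb).mono interior_subset).congr
    fun x hx => (hderiv x hx).deriv.symm

/-- Convexity of `g(x) = x^{τ₁} (log(1+x))^{τ₂}` on `[0, ∞)` for `τ₁ > 2` and `τ₂ > 3/2`. -/
theorem convexOn_rpow_mul_log_rpow
    (τ₁ τ₂ : ℝ) (hτ₁ : 2 < τ₁) (hτ₂ : 3 / 2 < τ₂) :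
    ConvexOn ℝ (Set.Ici (0 : ℝ))
      (fun x : ℝ => x ^ τ₁ * (Real.log (1 + x)) ^ τ₂) :=
  convexOn_rpow_mul_log_one_add_rpow (by linarith) (by linarith)
end
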